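/- Let L ∈ ℕ with L ≥ 1, let m, p ≥ 1, set q := m + p, let K ∈ ℕ with K ≥ 1, and let τ_1, …, τ_K > 0. For each k, let u_k ∈ H^{L−1}([0,τ_k];ℝ^m) and y_k ∈ H^{L}([0,τ_k];ℝ^p), and set w_k := (u_k; y_k) : [0,τ_k] → ℝ^q. Say that R ∈ ℝ^{p×qL}, partitioned as R = [R_{u,0} R_{y,0} ⋯ R_{u,L−1} R_{y,L−1}], is consistent with the noise-free data if y_k^{(L)}(t) + Σ_{ℓ=0}^{L−1} ( R_{u,ℓ} u_k^{(ℓ)}(t) + R_{y,ℓ} y_k^{(ℓ)}(t) ) = 0 for almost every t ∈ [0,τ_k] and every k = 1,…,K. For k = 1,…,K and φ ∈ H^L_0[0,τ_k], let h_k(φ) ∈ ℝ^{qL} be the vector obtained by stacking the blocks (−1)^ℓ ∫_0^{τ_k} φ^{(ℓ)}(t) w_k(t) dt ∈ ℝ^q for ℓ = 0, …, L−1. Assume there exists R_s ∈ ℝ^{p×qL} consistent with the noise-free data. Then the following are equivalent: (i) every R ∈ ℝ^{p×qL} consistent with the noise-free data equals R_s; (ii) the linear span of { h_k(φ) : k =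 1,…,K, φ ∈ H^L_0[0,τ_k] } equals ℝ^{qL}. -/

import Mathlib

open MeasureTheory Matrix

/-- `D` is a chain of a.e. derivatives on `[0,τ]` up to order `L`: for each `ℓ < L`,
`D (ℓ+1)` is integrable on `[0,τ]` and `D ℓ` is its antiderivative there, i.e. `D ℓ` is
absolutely continuous on `[0,τ]` with a.e. derivative `D (ℓ+1)`. -/
def DerivChain (τ : ℝ) (L : ℕ) {E : Type} [NormedAddCommGroup E] [NormedSpace ℝ E]
    (D : ℕ → ℝ → E) : Prop :=
  ∀ ℓ < L, IntervalIntegrable (D (ℓ + 1)) MeasureTheory.volume 0 τ ∧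
    ∀ t ∈ Set.Icc (0 : ℝ) τ, D ℓ t = D ℓ 0 + ∫ s in (0 : ℝ)..t, D (ℓ + 1) s

/-- `f ∈ L²([0,τ]; E)`. -/
def MemL2 (τ : ℝ) {E : Type} [NormedAddCommGroup E] (f : ℝ → E) : Prop :=
  MeasureTheory.MemLp f 2 (MeasureTheory.volume.restrict (Set.Ioc (0 : ℝ) τ))

/-- `D` represents an element of `H^L_0[0,τ]` together with its derivatives: the chain
condition, `D L ∈ L²(0,τ)`, and `D ℓ` vanishes at `0` and at `τ` for all `ℓ < L`.
The element of `H^L_0[0,τ]` itself is `D 0`. -/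
def IsH0 (τ : ℝ) (L : ℕ) (D : ℕ → ℝ → ℝ) : Prop :=
  DerivChain τ L D ∧ MemL2 τ (D L) ∧ ∀ ℓ < L, D ℓ 0 = 0 ∧ D ℓ τ = 0

/-- `D` represents an element of the Sobolev space `H^M([0,τ]; E)` together with its
derivatives: the chain condition and `D M ∈ L²`. The element itself is `D 0`. -/
def IsHSob (τ : ℝ) (M : ℕ) {E : Type} [NormedAddCommGroup E] [NormedSpace ℝ E]
    (D : ℕ → ℝ → E) : Prop :=
  DerivChain τ M D ∧ MemL2 τ (D M)

/-!
Pairing `h_k(φ)` with `c ∈ ℝ^{qL}` and integrating by parts `ℓ` times in the `ℓ`-th block (the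
boundary terms vanish because `φ ∈ H^L_0`) gives
`⟪h_k(φ), c⟫ = ∫ φ(t) · (c ⬝ col(w_k, w_k', …, w_k^{(L-1)})(t)) dt`.
By the fundamental lemma of the calculus of variations, `c` is orthogonal to every `h_k(φ)` iff
`c ⬝ col(w_k^{(ℓ)}) = 0` a.e. for all `k`, i.e. iff adding `c` to a row of `R_s` keeps it consistent
with the data. Hence the `h_k(φ)` span `ℝ^{qL}` iff no such `c ≠ 0` exists iff `R_s` is the only
consistent matrix.
-/

open Set Interval
open scoped ContDiff

theorem MemL2.intervalIntegrable {E : Type} [NormedAddCommGroup E] {τ : ℝ} (hτ : 0 ≤ τ)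
    {f : ℝ → E} (h : MemL2 τ f) :
    IntervalIntegrable f volume 0 τ := by
  have : IsFiniteMeasure (volume.restrict (Ioc (0 : ℝ) τ)) := by
    rw [isFiniteMeasure_restrict]; exact measure_Ioc_lt_top.ne
  rw [intervalIntegrable_iff_integrableOn_Ioc_of_le hτ]
  exact h.integrable one_le_two

section DerivChain

variable {E E' : Type} [NormedAddCommGroup E] [NormedSpace ℝ E]
  [NormedAddCommGroup E'] [NormedSpace ℝ E'] {τ : ℝ} {N : ℕ} {F : ℕ → ℝ → E}

theorem DerivChain.continuousOn (hτ : 0 ≤ τ) (h : DerivChain τ N F) {b : ℕ} (hb : b < N) :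
    ContinuousOn (F b) (Icc 0 τ) := by
  obtain ⟨hint, heq⟩ := h b hb
  have hprim := intervalIntegral.continuousOn_primitive_interval' hint left_mem_uIcc
  rw [uIcc_of_le hτ] at hprim
  exact (continuousOn_const.add hprim).congr heq

theorem DerivChain.intervalIntegrable (hτ : 0 ≤ τ) (h : DerivChain τ N F)
    (htop : IntervalIntegrable (F N) volume 0 τ) {b : ℕ} (hb : b ≤ N) :
    IntervalIntegrable (F b) volume 0 τ := by
  obtain rfl | hlt := hb.eq_or_lt
  · exact htop
  · exact (uIcc_of_le hτ ▸ h.continuousOn hτ hlt).intervalIntegrable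

theorem IsHSob.intervalIntegrable (hτ : 0 ≤ τ) (h : IsHSob τ N F) {b : ℕ} (hb : b ≤ N) :
    IntervalIntegrable (F b) volume 0 τ :=
  h.1.intervalIntegrable hτ (h.2.intervalIntegrable hτ) hb

theorem DerivChain.map [CompleteSpace E] [CompleteSpace E'] (h : DerivChain τ N F)
    (A : E →L[ℝ] E') : DerivChain τ N fun ℓ t => A (F ℓ t) := by
  intro ℓ hℓ
  obtain ⟨hint, heq⟩ := h ℓ hℓ
  refine ⟨⟨A.integrable_comp hint.1, A.integrable_comp hint.2⟩, fun t ht => ?_⟩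
  have hint' : IntervalIntegrable (F (ℓ + 1)) volume 0 t :=
    hint.mono_set (uIcc_subset_uIcc_left (Icc_subset_uIcc ht))
  simp only [heq t ht, map_add, A.intervalIntegral_comp_comm hint']

end DerivChain

theorem ae_deriv_const_add_integral_eq {f : ℝ → ℝ} {a b : ℝ}
    (hf : IntervalIntegrable f volume a b) (C : ℝ) :
    ∀ᵐ x, x ∈ uIcc a b → deriv (fun x => C + ∫ s in a..x, f s) x = f x := by
  filter_upwards [hf.ae_hasDerivAt_integral] with x hx hxab
  exact ((hx hxab a left_mem_uIcc).const_add C).deriv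

theorem absolutelyContinuousOnInterval_const_add_integral {f : ℝ → ℝ} {a b : ℝ}
    (hf : IntervalIntegrable f volume a b) (C : ℝ) :
    AbsolutelyContinuousOnInterval (fun x => C + ∫ s in a..x, f s) a b :=
  (contDiffOn_const (n := 1)).absolutelyContinuousOnInterval.add
    (hf.absolutelyContinuousOnInterval_intervalIntegral left_mem_uIcc)

theorem integral_mul_eq_sub_of_eq_primitive {a b : ℝ} (hab : a ≤ b) {f g F G : ℝ → ℝ}
    (hf : IntervalIntegrable f volume a b) (hg : IntervalIntegrable g volume a b)
    (hF : ∀ t ∈ Icc a b, F t = F a + ∫ s in a..t, f s)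
    (hG : ∀ t ∈ Icc a b, G t = G a + ∫ s in a..t, g s) :
    ∫ t in a..b, F t * g t = F b * G b - F a * G a - ∫ t in a..b, f t * G t := by
  have hibp := (absolutelyContinuousOnInterval_const_add_integral hf (F a))
    |>.integral_mul_deriv_eq_deriv_mul (absolutelyContinuousOnInterval_const_add_integral hg (G a))
  have hb : b ∈ Icc a b := right_mem_Icc.2 hab
  simp only [intervalIntegral.integral_same, add_zero, ← hF b hb, ← hG b hb] at hibp
  have hsub : ∀ x ∈ Ι a b, x ∈ Icc a b := fun x hx => Ioc_subset_Icc_self (uIoc_of_le hab ▸ hx)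
  have hFg : ∫ t in a..b, F t * g t = ∫ t in a..b,
      (F a + ∫ s in a..t, f s) * deriv (fun x => G a + ∫ s in a..x, g s) t := by
    refine intervalIntegral.integral_congr_ae ?_
    filter_upwards [ae_deriv_const_add_integral_eq hg (G a)] with x hx hxab
    rw [hx (uIoc_subset_uIcc hxab), ← hF x (hsub x hxab)]
  have hfG : ∫ t in a..b, f t * G t = ∫ t in a..b,
      deriv (fun x => F a + ∫ s in a..x, f s) t * (G a + ∫ s in a..t, g s) := by
    refine intervalIntegral.integral_congr_ae ?_
    filter_upwards [ae_deriv_const_add_integral_eq hf (F a)] with x hx hxab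
    rw [hx (uIoc_subset_uIcc hxab), ← hG x (hsub x hxab)]
  rw [hFg, hfG, hibp]

section IsH0

variable {τ : ℝ} {L : ℕ} {D : ℕ → ℝ → ℝ}

theorem IsH0.integral_succ_mul_eq_neg (hτ : 0 ≤ τ) (hD : IsH0 τ L D) {a : ℕ} (ha : a < L)
    {g G : ℝ → ℝ} (hg : IntervalIntegrable g volume 0 τ)
    (hG : ∀ t ∈ Icc 0 τ, G t = G 0 + ∫ s in (0 : ℝ)..t, g s) :
    ∫ t in (0 : ℝ)..τ, D (a + 1) t * G t = -∫ t in (0 : ℝ)..τ, D a t * g t := by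
  obtain ⟨hchain, -, hbdry⟩ := hD
  rw [integral_mul_eq_sub_of_eq_primitive hτ (hchain a ha).1 hg (hchain a ha).2 hG,
    (hbdry a ha).1, (hbdry a ha).2]
  ring

theorem IsH0.integral_mul_derivChain (hτ : 0 ≤ τ) (hD : IsH0 τ L D) {N : ℕ} {F : ℕ → ℝ → ℝ}
    (hF : DerivChain τ N F) {a n : ℕ} (hn : n ≤ N) (han : a + n < L) :
    ∫ t in (0 : ℝ)..τ, D (a + n) t * F 0 t = (-1) ^ n * ∫ t in (0 : ℝ)..τ, D a t * F n t := by
  induction n generalizing a with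
  | zero => simp
  | succ n ih =>
    rw [show a + (n + 1) = a + 1 + n by omega, ih (by omega) (by omega),
      hD.integral_succ_mul_eq_neg hτ (by omega) (hF n (by omega)).1 (hF n (by omega)).2]
    ring

theorem isH0_iteratedDeriv {φ : ℝ → ℝ} (hφ : ContDiff ℝ ∞ φ) (hsupp : HasCompactSupport φ)
    (hsub : tsupport φ ⊆ Ioo 0 τ) : IsH0 τ L fun ℓ => iteratedDeriv ℓ φ := by
  have hcont : ∀ ℓ, Continuous (iteratedDeriv ℓ φ) := fun ℓ =>
    hφ.continuous_iteratedDeriv ℓ (mod_cast le_top)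
  have htsupp : ∀ ℓ, tsupport (iteratedDeriv ℓ φ) ⊆ tsupport φ := by
    intro ℓ
    induction ℓ with
    | zero => simp
    | succ ℓ ih => exact iteratedDeriv_succ (f := φ) ▸ tsupport_deriv_subset.trans ih
  refine ⟨fun ℓ _ => ⟨(hcont (ℓ + 1)).intervalIntegrable 0 τ, fun t _ => ?_⟩, ?_, ?_⟩
  · rw [intervalIntegral.integral_eq_sub_of_hasDerivAt (fun x _ => ?_)
      ((hcont (ℓ + 1)).intervalIntegrable 0 t)]
    · ring
    · rw [iteratedDeriv_succ]
      exact (hφ.differentiable_iteratedDeriv ℓ (mod_cast ENat.natCast_lt_top ℓ) x).hasDerivAt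
  · exact ((hcont L).memLp_of_hasCompactSupport
      (hsupp.mono' (subset_tsupport _ |>.trans (htsupp L)))).restrict _
  · refine fun ℓ _ => ⟨image_eq_zero_of_notMem_tsupport fun h => ?_,
      image_eq_zero_of_notMem_tsupport fun h => ?_⟩
    · exact (hsub (htsupp ℓ h)).1.false
    · exact (hsub (htsupp ℓ h)).2.false

end IsH0

theorem ae_restrict_Ioc_eq_zero_of_forall_isH0 {τ : ℝ} (hτ : 0 ≤ τ) (L : ℕ) {g : ℝ → ℝ}
    (hg : IntervalIntegrable g volume 0 τ)
    (h : ∀ D, IsH0 τ L D → ∫ t in (0 : ℝ)..τ, D 0 t * g t = 0) :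
    ∀ᵐ t ∂volume.restrict (Ioc 0 τ), g t = 0 := by
  rw [← Measure.restrict_congr_set Ioo_ae_eq_Ioc, ae_restrict_iff' measurableSet_Ioo]
  refine isOpen_Ioo.ae_eq_zero_of_integral_contDiff_smul_eq_zero
    (hg.1.mono_set Ioo_subset_Ioc_self).locallyIntegrableOn fun φ hφ hsupp hsub => ?_
  have hφ0 : ∀ x ∉ Ioc 0 τ, φ x • g x = 0 := fun x hx => by
    rw [image_eq_zero_of_notMem_tsupport fun h => hx (Ioo_subset_Ioc_self (hsub h)), zero_smul]
  rw [← setIntegral_eq_integral_of_forall_compl_eq_zero hφ0, ← intervalIntegral.integral_of_le hτ]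
  exact h _ (isH0_iteratedDeriv hφ hsupp hsub)

section DataEmbedding

variable {ι : Type*} [Fintype ι]

/-- The stacked vector `col(w, w', …, w^{(L-1)})(t)`, where `W ℓ = w^{(ℓ)}`. -/
def jet (L : ℕ) (W : ℕ → ℝ → ι → ℝ) (t : ℝ) : Fin L × ι → ℝ := fun r => W r.1 t r.2

/-- The paper's `h(φ)` for `φ = D 0`, `w = W 0`. -/
noncomputable def dataEmbedding (τ : ℝ) (L : ℕ) (W : ℕ → ℝ → ι → ℝ) (D : ℕ → ℝ → ℝ) :
    Fin L × ι → ℝ :=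
  fun r => (-1) ^ (r.1 : ℕ) * ∫ t in (0 : ℝ)..τ, D r.1 t * W 0 t r.2

variable {τ : ℝ} {L : ℕ} {W : ℕ → ℝ → ι → ℝ}

theorem intervalIntegrable_dotProduct_jet
    (hWint : ∀ j, ∀ ℓ < L, IntervalIntegrable (fun t => W ℓ t j) volume 0 τ)
    (c : Fin L × ι → ℝ) : IntervalIntegrable (fun t => c ⬝ᵥ jet L W t) volume 0 τ := by
  simpa only [dotProduct, jet, Finset.sum_fn] using IntervalIntegrable.sum Finset.univ
    fun r _ => (hWint r.2 r.1 r.1.isLt).const_mul (c r)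

theorem dataEmbedding_dotProduct (hτ : 0 ≤ τ) {D : ℕ → ℝ → ℝ} (hD : IsH0 τ L D)
    (hW : ∀ j, DerivChain τ (L - 1) fun ℓ t => W ℓ t j)
    (hWint : ∀ j, ∀ ℓ < L, IntervalIntegrable (fun t => W ℓ t j) volume 0 τ)
    (c : Fin L × ι → ℝ) :
    dataEmbedding τ L W D ⬝ᵥ c = ∫ t in (0 : ℝ)..τ, D 0 t * (c ⬝ᵥ jet L W t) := by
  have hterm : ∀ r : Fin L × ι, dataEmbedding τ L W D r * c r =
      ∫ t in (0 : ℝ)..τ, D 0 t * (c r * W r.1 t r.2) := by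
    intro r
    have hmove := hD.integral_mul_derivChain hτ (hW r.2) (a := 0) (n := r.1) (by omega)
      (by simp)
    rw [zero_add] at hmove
    simp_rw [mul_left_comm (D 0 _) (c r), intervalIntegral.integral_const_mul]
    rw [dataEmbedding, hmove, ← mul_assoc, ← mul_pow]
    norm_num [mul_comm]
  have hint : ∀ r : Fin L × ι,
      IntervalIntegrable (fun t => D 0 t * (c r * W r.1 t r.2)) volume 0 τ := by
    intro r
    have hD0 := hD.1.continuousOn hτ (Nat.zero_lt_of_lt r.1.isLt)
    exact ((hWint r.2 r.1 r.1.isLt).const_mul _).continuousOn_mul (uIcc_of_le hτ ▸ hD0)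
  simp only [dotProduct, hterm, jet, Finset.mul_sum]
  rw [intervalIntegral.integral_finsetSum fun r _ => hint r]

theorem forall_dataEmbedding_dotProduct_eq_zero_iff (hτ : 0 ≤ τ)
    (hW : ∀ j, DerivChain τ (L - 1) fun ℓ t => W ℓ t j)
    (hWint : ∀ j, ∀ ℓ < L, IntervalIntegrable (fun t => W ℓ t j) volume 0 τ)
    (c : Fin L × ι → ℝ) :
    (∀ D, IsH0 τ L D → dataEmbedding τ L W D ⬝ᵥ c = 0) ↔
      ∀ᵐ t ∂volume.restrict (Ioc 0 τ), c ⬝ᵥ jet L W t = 0 := by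
  refine ⟨fun h => ae_restrict_Ioc_eq_zero_of_forall_isH0 hτ L
    (intervalIntegrable_dotProduct_jet hWint c) fun D hD => ?_, fun h D hD => ?_⟩
  · rw [← dataEmbedding_dotProduct hτ hD hW hWint c, h D hD]
  rw [dataEmbedding_dotProduct hτ hD hW hWint c, intervalIntegral.integral_of_le hτ]
  exact integral_eq_zero_of_ae (by filter_upwards [h] with t ht; simp [ht])

end DataEmbedding

theorem span_eq_top_iff_forall_dotProduct_eq_zero {K ι : Type*} [Field K] [Fintype ι]
    (S : Set (ι → K)) :
    Submodule.span K S = ⊤ ↔ ∀ c : ι → K, (∀ x ∈ S, x ⬝ᵥ c = 0) → c = 0 := by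
  classical
  rw [← Submodule.dualAnnihilator_eq_bot_iff, Submodule.eq_bot_iff,
    (dotProductEquiv K ι).symm.toEquiv.forall_congr_left]
  refine forall_congr' fun c => ?_
  rw [← SetLike.mem_coe, Submodule.coe_dualAnnihilator_span]
  simp [Set.subset_def, dotProduct_comm]

theorem span_dataEmbedding_eq_top_iff {ι κ : Type*} [Fintype ι] {L : ℕ} {τ : κ → ℝ}
    (hτ : ∀ k, 0 ≤ τ k) {W : κ → ℕ → ℝ → ι → ℝ}
    (hW : ∀ k j, DerivChain (τ k) (L - 1) fun ℓ t => W k ℓ t j)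
    (hWint : ∀ k j, ∀ ℓ < L, IntervalIntegrable (fun t => W k ℓ t j) volume 0 (τ k)) :
    Submodule.span ℝ {x | ∃ k D, IsH0 (τ k) L D ∧ x = dataEmbedding (τ k) L (W k) D} = ⊤ ↔
      ∀ c, (∀ k, ∀ᵐ t ∂volume.restrict (Ioc 0 (τ k)), c ⬝ᵥ jet L (W k) t = 0) → c = 0 := by
  rw [span_eq_top_iff_forall_dotProduct_eq_zero]
  refine forall_congr' fun c => imp_congr_left ?_
  simp_rw [← fun k => forall_dataEmbedding_dotProduct_eq_zero_iff (hτ k) (hW k) (hWint k) c]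
  exact ⟨fun h k D hD => h _ ⟨k, D, hD, rfl⟩, fun h x ⟨k, D, hD, hx⟩ => hx ▸ h k D hD⟩

section BlockRowMatrix

variable {R α β : Type*} {L : ℕ}

/-- The paper's `R = [R_{u,0} R_{y,0} ⋯ R_{u,L-1} R_{y,L-1}]`. -/
def blockRowMatrix (Ru : Fin L → Matrix β α R) (Ry : Fin L → Matrix β β R) :
    Matrix β (Fin L × (α ⊕ β)) R :=
  Matrix.of fun i r => Sum.elim (Ru r.1 i) (Ry r.1 i) r.2

theorem blockRowMatrix_add [Add R] (Ru Ru' : Fin L → Matrix β α R)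
    (Ry Ry' : Fin L → Matrix β β R) :
    blockRowMatrix (Ru + Ru') (Ry + Ry') = blockRowMatrix Ru Ry + blockRowMatrix Ru' Ry' := by
  ext i ⟨ℓ, j | j⟩ <;> rfl

theorem blockRowMatrix_inj {Ru Ru' : Fin L → Matrix β α R} {Ry Ry' : Fin L → Matrix β β R} :
    blockRowMatrix Ru Ry = blockRowMatrix Ru' Ry' ↔ Ru = Ru' ∧ Ry = Ry' :=
  ⟨fun h => ⟨funext fun ℓ => Matrix.ext fun i j => congrFun (congrFun h i) (ℓ, .inl j),
    funext fun ℓ => Matrix.ext fun i j => congrFun (congrFun h i) (ℓ, .inr j)⟩,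
    fun ⟨hu, hy⟩ => hu ▸ hy ▸ rfl⟩

theorem sum_mulVec_add_mulVec [NonUnitalNonAssocSemiring R] [Fintype α] [Fintype β]
    (Ru : Fin L → Matrix β α R) (Ry : Fin L → Matrix β β R)
    (u : ℕ → α → R) (y : ℕ → β → R) :
    ∑ ℓ : Fin L, (Ru ℓ *ᵥ u ℓ + Ry ℓ *ᵥ y ℓ) =
      blockRowMatrix Ru Ry *ᵥ fun r => Sum.elim (u r.1) (y r.1) r.2 := by
  ext i
  simp [mulVec, dotProduct, blockRowMatrix, Fintype.sum_prod_type, Fintype.sum_sum_type]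

end BlockRowMatrix

section IsConsistent

variable {κ α β : Type*} [Fintype α] [Fintype β] {L : ℕ} {τ : κ → ℝ}
  {U : κ → ℕ → ℝ → α → ℝ} {Y : κ → ℕ → ℝ → β → ℝ}

def IsConsistent (τ : κ → ℝ) (U : κ → ℕ → ℝ → α → ℝ) (Y : κ → ℕ → ℝ → β → ℝ)
    (Ru : Fin L → Matrix β α ℝ) (Ry : Fin L → Matrix β β ℝ) : Prop :=
  ∀ k, ∀ᵐ t ∂volume.restrict (Ioc 0 (τ k)),
    Y k L t + ∑ ℓ : Fin L, (Ru ℓ *ᵥ U k ℓ t + Ry ℓ *ᵥ Y k ℓ t) = 0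

theorem isConsistent_iff {Ru : Fin L → Matrix β α ℝ} {Ry : Fin L → Matrix β β ℝ} :
    IsConsistent τ U Y Ru Ry ↔ ∀ k, ∀ᵐ t ∂volume.restrict (Ioc 0 (τ k)),
      Y k L t + blockRowMatrix Ru Ry *ᵥ jet L (fun ℓ t => Sum.elim (U k ℓ t) (Y k ℓ t)) t = 0 := by
  have hsum : ∀ k t, ∑ ℓ : Fin L, (Ru ℓ *ᵥ U k ℓ t + Ry ℓ *ᵥ Y k ℓ t) =
      blockRowMatrix Ru Ry *ᵥ jet L (fun ℓ t => Sum.elim (U k ℓ t) (Y k ℓ t)) t :=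
    fun k t => sum_mulVec_add_mulVec Ru Ry (fun ℓ => U k ℓ t) (fun ℓ => Y k ℓ t)
  simp only [IsConsistent, hsum]

theorem forall_isConsistent_imp_eq_iff [Nonempty β] {Rsu : Fin L → Matrix β α ℝ}
    {Rsy : Fin L → Matrix β β ℝ} (hRs : IsConsistent τ U Y Rsu Rsy) :
    (∀ Ru Ry, IsConsistent τ U Y Ru Ry → Ru = Rsu ∧ Ry = Rsy) ↔
      ∀ c, (∀ k, ∀ᵐ t ∂volume.restrict (Ioc 0 (τ k)),
        c ⬝ᵥ jet L (fun ℓ t => Sum.elim (U k ℓ t) (Y k ℓ t)) t = 0) → c = 0 := by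
  simp only [isConsistent_iff] at hRs ⊢
  constructor
  · intro huniq c hc
    -- adding `c` to every row of `R_s` keeps it consistent
    set Cu : Fin L → Matrix β α ℝ := fun ℓ => Matrix.of fun _ j => c (ℓ, .inl j)
    set Cy : Fin L → Matrix β β ℝ := fun ℓ => Matrix.of fun _ j => c (ℓ, .inr j)
    have hC : blockRowMatrix Cu Cy = Matrix.of fun _ => c := by ext i ⟨ℓ, j | j⟩ <;> rfl
    obtain ⟨hu, hy⟩ := huniq (Rsu + Cu) (Rsy + Cy) fun k => by
      filter_upwards [hRs k, hc k] with t hs hct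
      rw [blockRowMatrix_add, add_mulVec, ← add_assoc, hs, zero_add, hC]
      exact funext fun _ => hct
    obtain ⟨i⟩ := ‹Nonempty β›
    ext ⟨ℓ, j | j⟩
    · exact congrFun (congrFun (congrFun (add_eq_left.1 hu) ℓ) i) j
    · exact congrFun (congrFun (congrFun (add_eq_left.1 hy) ℓ) i) j
  · intro hnull Ru Ry hR
    refine blockRowMatrix_inj.1 (funext fun i => sub_eq_zero.1 (hnull _ fun k => ?_))
    filter_upwards [hR k, hRs k] with t h h'
    simpa [mulVec, sub_dotProduct, sub_eq_zero] using congrFun (h.trans h'.symm) i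

end IsConsistent

theorem stmt_10_general (L m p K : ℕ) (hp : 1 ≤ p)
    (τ : Fin K → ℝ) (hτ : ∀ k, 0 < τ k)
    (U : Fin K → ℕ → ℝ → Fin m → ℝ) (hU : ∀ k, IsHSob (τ k) (L - 1) (U k))
    (Y : Fin K → ℕ → ℝ → Fin p → ℝ) (hY : ∀ k, IsHSob (τ k) L (Y k))
    (Rsu : Fin L → Matrix (Fin p) (Fin m) ℝ) (Rsy : Fin L → Matrix (Fin p) (Fin p) ℝ)
    (hRs : ∀ k, ∀ᵐ t ∂(MeasureTheory.volume.restrict (Set.Ioc (0 : ℝ) (τ k))),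
      Y k L t +
        ∑ ℓ : Fin L, ((Rsu ℓ).mulVec (U k ℓ t) + (Rsy ℓ).mulVec (Y k ℓ t)) = 0) :
    (∀ (Ru : Fin L → Matrix (Fin p) (Fin m) ℝ) (Ry : Fin L → Matrix (Fin p) (Fin p) ℝ),
        (∀ k, ∀ᵐ t ∂(MeasureTheory.volume.restrict (Set.Ioc (0 : ℝ) (τ k))),
          Y k L t +
            ∑ ℓ : Fin L, ((Ru ℓ).mulVec (U k ℓ t) + (Ry ℓ).mulVec (Y k ℓ t)) = 0) →
        Ru = Rsu ∧ Ry = Rsy) ↔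
      Submodule.span ℝ
        {x : Fin L × (Fin m ⊕ Fin p) → ℝ |
          ∃ (k : Fin K) (D : ℕ → ℝ → ℝ), IsH0 (τ k) L D ∧
            x = fun r => (-1 : ℝ) ^ (r.1 : ℕ) *
              ∫ t in (0 : ℝ)..(τ k),
                D (r.1 : ℕ) t * Sum.elim (U k 0 t) (Y k 0 t) r.2} = ⊤ := by
  have : Nonempty (Fin p) := Fin.pos_iff_nonempty.1 hp
  have hW : ∀ k j, DerivChain (τ k) (L - 1) fun ℓ t => Sum.elim (U k ℓ t) (Y k ℓ t) j := by
    rintro k (j | j)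
    · exact (hU k).1.map (ContinuousLinearMap.proj j)
    · exact fun ℓ hℓ => (hY k).1.map (ContinuousLinearMap.proj j) ℓ (by omega)
  have hWint : ∀ k j, ∀ ℓ < L,
      IntervalIntegrable (fun t => Sum.elim (U k ℓ t) (Y k ℓ t) j) volume 0 (τ k) := by
    rintro k (j | j) ℓ hℓ
    · have h := (hU k).intervalIntegrable (hτ k).le (b := ℓ) (by omega)
      exact ⟨h.1.eval j, h.2.eval j⟩
    · have h := (hY k).intervalIntegrable (hτ k).le hℓ.le
      exact ⟨h.1.eval j, h.2.eval j⟩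
  exact (forall_isConsistent_imp_eq_iff hRs).trans
    (span_dataEmbedding_eq_top_iff (fun k => (hτ k).le) hW hWint).symm

/-- **Proposition 5.3, (i) ⇔ (ii).** For noise-free data generated by some true system
`R_s = (Rsu, Rsy)`, the data determine the system uniquely iff the vectors `H_k φ`
(stacking the blocks `(-1)^ℓ ∫_0^{τ_k} φ^{(ℓ)} w_k`, `ℓ = 0,…,L-1`, over test functions
`φ ∈ H^L_0[0,τ_k]` and trajectories `k`) span all of `ℝ^{qL}`. Coordinates of `ℝ^{qL}`
are indexed by `Fin L × (Fin m ⊕ Fin p)`. -/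
theorem stmt_10 (L m p K : ℕ) (hL : 1 ≤ L) (hm : 1 ≤ m) (hp : 1 ≤ p) (hK : 1 ≤ K)
    (τ : Fin K → ℝ) (hτ : ∀ k, 0 < τ k)
    (U : Fin K → ℕ → ℝ → Fin m → ℝ) (hU : ∀ k, IsHSob (τ k) (L - 1) (U k))
    (Y : Fin K → ℕ → ℝ → Fin p → ℝ) (hY : ∀ k, IsHSob (τ k) L (Y k))
    (Rsu : Fin L → Matrix (Fin p) (Fin m) ℝ) (Rsy : Fin L → Matrix (Fin p) (Fin p) ℝ)
    (hRs : ∀ k, ∀ᵐ t ∂(MeasureTheory.volume.restrict (Set.Ioc (0 : ℝ) (τ k))),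
      Y k L t +
        ∑ ℓ : Fin L, ((Rsu ℓ).mulVec (U k ℓ t) + (Rsy ℓ).mulVec (Y k ℓ t)) = 0) :
    (∀ (Ru : Fin L → Matrix (Fin p) (Fin m) ℝ) (Ry : Fin L → Matrix (Fin p) (Fin p) ℝ),
        (∀ k, ∀ᵐ t ∂(MeasureTheory.volume.restrict (Set.Ioc (0 : ℝ) (τ k))),
          Y k L t +
            ∑ ℓ : Fin L, ((Ru ℓ).mulVec (U k ℓ t) + (Ry ℓ).mulVec (Y k ℓ t)) = 0) →
        Ru = Rsu ∧ Ry = Rsy) ↔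
      Submodule.span ℝ
        {x : Fin L × (Fin m ⊕ Fin p) → ℝ |
          ∃ (k : Fin K) (D : ℕ → ℝ → ℝ), IsH0 (τ k) L D ∧
            x = fun r => (-1 : ℝ) ^ (r.1 : ℕ) *
              ∫ t in (0 : ℝ)..(τ k),
                D (r.1 : ℕ) t * Sum.elim (U k 0 t) (Y k 0 t) r.2} = ⊤ :=
  stmt_10_general L m p K hp τ hτ U hU Y hY Rsu Rsy hRs
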